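/- Let (ζ,x,y) be isothermal boundary-compatible toroidal coordinates on the universal cover Q̃ of a toroidal domain, and let u_ζ be a vector field on the closed unit disc D tangent to ∂D. If r = x ∂_x + y ∂_y and N_ζ is the shift vector of (ζ,x,y), then r · (u_ζ + N_ζ) = 0 on ∂D, where · is the standard dot product on ℝ². -/

import Mathlib

/-! Row `0` of `g⁻¹ g = 1`, with the isothermal block `c • 1` of `g` in the `(x, y)`-directions,
reads `(g⁻¹)₀₀ 𝒩ⱼ + c (g⁻¹)₀ⱼ = 0`. Pairing with `r`, boundary compatibility kills the second
term and `(g⁻¹)₀₀ > 0`, so `r · 𝒩 = 0`; since `N = c⁻¹ 𝒩`, also `r · N = 0`. -/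

noncomputable section

open Matrix

abbrev P2 := Fin 2 → ℝ
abbrev P3 := Fin 3 → ℝ

def Disc2 : Set P2 := {z | z 0 ^ 2 + z 1 ^ 2 ≤ 1}
def Cyl : Set P3 := {q | q 1 ^ 2 + q 2 ^ 2 ≤ 1}

/-- Poloidal inclusion in coordinates: I_ζ(x,y) = (ζ,x,y). -/
def emb (ζ : ℝ) (z : P2) : P3 := Fin.cons ζ z

/-- Hypersurface metric h_ζ = I_ζ* g̃ in coordinates. -/
def hmet (g : P3 → Matrix (Fin 3) (Fin 3) ℝ) (ζ : ℝ) (z : P2) : Matrix (Fin 2) (Fin 2) ℝ :=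
  Matrix.of fun i j => g (emb ζ z) i.succ j.succ

/-- Shift form 𝒩_ζ = I_ζ*(ι_{∂_ζ} g̃) in coordinates. -/
def shiftform (g : P3 → Matrix (Fin 3) (Fin 3) ℝ) (ζ : ℝ) (z : P2) (i : Fin 2) : ℝ :=
  g (emb ζ z) 0 i.succ

/-- Shift vector N_ζ: the h_ζ-sharp of the shift form. -/
def shiftvec (g : P3 → Matrix (Fin 3) (Fin 3) ℝ) (ζ : ℝ) (z : P2) : P2 :=
  (hmet g ζ z)⁻¹.mulVec (shiftform g ζ z)

/-- Boundary-compatible toroidal coordinates: at every boundary point the unit normal n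
(proportional to the g̃-gradient of x² + y²) has vanishing ζ-component dζ(n) = 0. -/
def BoundaryCompat (g : P3 → Matrix (Fin 3) (Fin 3) ℝ) : Prop :=
  ∀ q ∈ Cyl, q 1 ^ 2 + q 2 ^ 2 = 1 →
    (g q)⁻¹ 0 1 * q 1 + (g q)⁻¹ 0 2 * q 2 = 0

/-- Isothermal toroidal coordinates: the hypersurface metric is conformal to dx² + dy², i.e.
h_ζ = f_ζ (dx² + dy²) for a nowhere-vanishing function f_ζ. -/
def Isothermal (g : P3 → Matrix (Fin 3) (Fin 3) ℝ) : Prop :=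
  ∃ f : ℝ → P2 → ℝ, (∀ ζ z, f ζ z ≠ 0) ∧
    ∀ ζ z, hmet g ζ z = f ζ z • (1 : Matrix (Fin 2) (Fin 2) ℝ)

namespace Matrix

variable {R K : Type*} [CommRing R] [Field K] {n : ℕ}

theorem mul_apply_zero_succ_of_submatrix_succ_eq_smul_one
    {A M : Matrix (Fin (n + 1)) (Fin (n + 1)) R} {c : R}
    (hM : M.submatrix Fin.succ Fin.succ = c • 1) (j : Fin n) :
    (A * M) 0 j.succ = A 0 0 * M 0 j.succ + c * A 0 j.succ := by
  have hMj (i : Fin n) : M i.succ j.succ = c * (1 : Matrix (Fin n) (Fin n) R) i j := by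
    simpa using congrFun (congrFun hM i) j
  simp only [mul_apply, Fin.sum_univ_succ, hMj, one_apply, mul_ite, mul_one, mul_zero,
    Finset.sum_ite_eq', Finset.mem_univ, if_true]
  ring

theorem tail_row_zero_dotProduct_eq_zero_of_mul_eq_one
    {A M : Matrix (Fin (n + 1)) (Fin (n + 1)) K} {c : K} (hAM : A * M = 1)
    (hM : M.submatrix Fin.succ Fin.succ = c • 1) (hA : A 0 0 ≠ 0)
    {v : Fin n → K} (hv : Fin.tail (A 0) ⬝ᵥ v = 0) : Fin.tail (M 0) ⬝ᵥ v = 0 := by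
  have hrow (j : Fin n) : A 0 0 * M 0 j.succ = -(c * A 0 j.succ) := by
    have := mul_apply_zero_succ_of_submatrix_succ_eq_smul_one (A := A) hM j
    rw [hAM, one_apply_ne (Fin.succ_ne_zero j).symm] at this
    linear_combination -this
  have hscaled : A 0 0 * (Fin.tail (M 0) ⬝ᵥ v) = -c * (Fin.tail (A 0) ⬝ᵥ v) := by
    simp only [dotProduct, Finset.mul_sum, Fin.tail, ← mul_assoc, hrow]
    exact Finset.sum_congr rfl fun j _ => by ring
  simpa [hv, hA] using hscaled

end Matrix

theorem shiftvec_eq_inv_smul_shiftform {g : P3 → Matrix (Fin 3) (Fin 3) ℝ} {ζ c : ℝ} {z : P2}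
    (hc : c ≠ 0) (h : hmet g ζ z = c • 1) : shiftvec g ζ z = c⁻¹ • shiftform g ζ z := by
  have hinv : (c • 1 : Matrix (Fin 2) (Fin 2) ℝ)⁻¹ = c⁻¹ • 1 := inv_eq_right_inv (by simp [hc])
  rw [shiftvec, h, hinv, smul_mulVec, one_mulVec]

theorem dotProduct_shiftform_eq_zero {g : P3 → Matrix (Fin 3) (Fin 3) ℝ}
    (hg : ∀ q : P3, (g q).PosDef) (hbc : BoundaryCompat g) {ζ c : ℝ} {z : P2}
    (h : hmet g ζ z = c • 1) (hz : z 0 ^ 2 + z 1 ^ 2 = 1) : z ⬝ᵥ shiftform g ζ z = 0 := by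
  set G := g (emb ζ z)
  have hGinv : G⁻¹ * G = 1 := nonsing_inv_mul G (hg _).det_pos.ne'.isUnit
  have hbcz : Fin.tail (G⁻¹ 0) ⬝ᵥ z = 0 := by
    simp only [dotProduct, Fin.sum_univ_two, Fin.tail]
    exact hbc (emb ζ z) hz.le hz
  rw [dotProduct_comm]
  exact tail_row_zero_dotProduct_eq_zero_of_mul_eq_one hGinv h (hg _).inv.diag_pos.ne' hbcz

theorem tangency_of_shifted_velocity_general
    (g : P3 → Matrix (Fin 3) (Fin 3) ℝ)
    (hg : ∀ q : P3, (g q).PosDef)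
    (hbc : BoundaryCompat g) (hiso : Isothermal g)
    (u : ℝ → P2 → P2)
    (hu : ∀ ζ : ℝ, ∀ z : P2, z 0 ^ 2 + z 1 ^ 2 = 1 →
      z 0 * u ζ z 0 + z 1 * u ζ z 1 = 0) :
    ∀ ζ : ℝ, ∀ z : P2, z 0 ^ 2 + z 1 ^ 2 = 1 →
      z 0 * (u ζ z 0 + shiftvec g ζ z 0) + z 1 * (u ζ z 1 + shiftvec g ζ z 1) = 0 := by
  obtain ⟨f, hf, hconf⟩ := hiso
  intro ζ z hz
  have hN := dotProduct_shiftform_eq_zero hg hbc (hconf ζ z) hz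
  rw [shiftvec_eq_inv_smul_shiftform (hf ζ z) (hconf ζ z)]
  simp only [dotProduct, Fin.sum_univ_two, Pi.smul_apply, smul_eq_mul] at hN ⊢
  linear_combination hu ζ z hz + (f ζ z)⁻¹ * hN

/-- Lemma `bc_lemma`. Let (ζ,x,y) be isothermal boundary-compatible toroidal
coordinates on the universal cover Q̃ of a toroidal domain and let u_ζ be a vector field on D
tangent to ∂D. If r = x∂_x + y∂_y and N_ζ is the shift vector, then r · (u_ζ + N_ζ) = 0 on ∂D,
where · is the standard dot product on ℝ². -/
theorem tangency_of_shifted_velocity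
    (g : P3 → Matrix (Fin 3) (Fin 3) ℝ)
    (hg : ∀ q : P3, (g q).PosDef) (hgsym : ∀ q : P3, (g q).IsSymm)
    (hbc : BoundaryCompat g) (hiso : Isothermal g)
    (u : ℝ → P2 → P2)
    (hu : ∀ ζ : ℝ, ∀ z : P2, z 0 ^ 2 + z 1 ^ 2 = 1 →
      z 0 * u ζ z 0 + z 1 * u ζ z 1 = 0) :
    ∀ ζ : ℝ, ∀ z : P2, z 0 ^ 2 + z 1 ^ 2 = 1 →
      z 0 * (u ζ z 0 + shiftvec g ζ z 0) + z 1 * (u ζ z 1 + shiftvec g ζ z 1) = 0 :=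
  tangency_of_shifted_velocity_general g hg hbc hiso u hu

end
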